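/- Let p∈U_δ(p₀) and 0<μ≤μ(p). Then the operator H_μ(p) has no eigenvalue in the semi-infinite interval (M(p),∞): for every z>M(p), the only f∈L²(T³) with H_μ(p)f=zf is f=0. -/

import Mathlib

open MeasureTheory Real Filter Topology

noncomputable section

/-- The 3-torus `T³ = (ℝ/2πℤ)³` is modeled as `ℝ³ = Fin 3 → ℝ`; all functions involved
are required to be `2π`-periodic in each variable. -/
abbrev 𝕋 : Type := Fin 3 → ℝ

/-- The shift by `2π` times an integer vector (a period of the torus). -/
def shift (v : Fin 3 → ℤ) : 𝕋 := fun i => 2 * Real.pi * (v i)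

/-- A fundamental domain `(-π, π]³` of the torus, used as the integration domain. -/
def box : Set 𝕋 := Set.univ.pi fun _ => Set.Ioc (-Real.pi) Real.pi

/-!
An eigenfunction `f` with eigenvalue `z > M` solves `(z - w_p) f = μ φ ⟨φ, f⟩`, so
`f = μ ⟨φ, f⟩ φ / (z - w_p)`. Either `⟨φ, f⟩ = 0` and `f = 0`, or pairing with `φ` gives
`μ ∫ φ² / (z - w_p) = 1`. The latter is impossible: the integral is strictly decreasing in `z`
past the threshold, so `μ ∫ φ² / (z - w_p) < μ Ω(p) ≤ 1`.
-/

section RankOnePerturbation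

variable {α : Type*} [MeasurableSpace α] {ν : Measure α} {a φ f : α → ℝ} {M z μ : ℝ}

/-- The null-set hypothesis rules out the junk value `φ² / 0 = 0` at the points where `a = M`. -/
theorem integral_sq_div_sub_lt (hφ : Measurable φ) (ha : Measurable a) (haM : ∀ x, a x ≤ M)
    (hnull : ∀ᵐ x ∂ν, a x ≠ M) (hz : M < z) (hΩ : 0 < ∫ x, φ x ^ 2 / (M - a x) ∂ν) :
    Integrable (fun x => φ x ^ 2 / (z - a x)) ν ∧
      ∫ x, φ x ^ 2 / (z - a x) ∂ν < ∫ x, φ x ^ 2 / (M - a x) ∂ν := by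
  set g : α → ℝ := fun x => φ x ^ 2 / (M - a x)
  set h : α → ℝ := fun x => φ x ^ 2 / (z - a x)
  have hlt : ∀ᵐ x ∂ν, a x < M := hnull.mono fun x hx => (haM x).lt_of_ne hx
  have hg_int : Integrable g ν := Integrable.of_integral_ne_zero hΩ.ne'
  have hh_le : ∀ᵐ x ∂ν, h x ≤ g x := hlt.mono fun x hx =>
    div_le_div_of_nonneg_left (sq_nonneg _) (sub_pos.2 hx) (by linarith)
  have hh_int : Integrable h ν := by
    refine hg_int.mono' (by fun_prop : Measurable h).aestronglyMeasurable ?_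
    filter_upwards [hh_le] with x hx
    rw [Real.norm_of_nonneg (div_nonneg (sq_nonneg _) (by linarith [haM x]))]
    exact hx
  refine ⟨hh_int, ?_⟩
  -- `g - h = g · (z - M) / (z - a)` with a positive factor, so `g - h` vanishes a.e. only if `g` does.
  have hdiff : ∀ᵐ x ∂ν, g x - h x = g x * ((z - M) / (z - a x)) := by
    filter_upwards [hlt] with x hx
    have : M - a x ≠ 0 := (sub_pos.2 hx).ne'
    have : z - a x ≠ 0 := by linarith
    simp only [g, h]
    field_simp
    ring
  by_contra! hge
  have hnn : 0 ≤ᵐ[ν] g - h := hh_le.mono fun x hx => sub_nonneg.2 hx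
  have hzero : g - h =ᵐ[ν] 0 := by
    refine (integral_eq_zero_iff_of_nonneg_ae hnn (hg_int.sub hh_int)).1 (le_antisymm ?_ ?_)
    · rw [integral_sub' hg_int hh_int]; linarith
    · exact integral_nonneg_of_ae hnn
  have hg_zero : g =ᵐ[ν] 0 := by
    filter_upwards [hzero, hdiff] with x h0 hx
    have hk : (z - M) / (z - a x) ≠ 0 := (div_pos (by linarith) (by linarith [haM x])).ne'
    simpa [hk] using hx.symm.trans h0
  rw [integral_congr_ae hg_zero] at hΩ
  simp at hΩ

theorem ae_eq_zero_of_rankOne_eigen (hφ : Measurable φ) (ha : Measurable a)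
    (haM : ∀ x, a x ≤ M) (hnull : ∀ᵐ x ∂ν, a x ≠ M) (hz : M < z) (hμ : 0 < μ)
    (hΩ : 0 < ∫ x, φ x ^ 2 / (M - a x) ∂ν) (hμle : μ ≤ (∫ x, φ x ^ 2 / (M - a x) ∂ν)⁻¹)
    (heig : ∀ᵐ x ∂ν, a x * f x + μ * φ x * ∫ t, φ t * f t ∂ν = z * f x) :
    f =ᵐ[ν] 0 := by
  set C := ∫ t, φ t * f t ∂ν
  have hza : ∀ x, z - a x ≠ 0 := fun x => by linarith [haM x]
  have hf : ∀ᵐ x ∂ν, f x = μ * C * φ x / (z - a x) := heig.mono fun x hx => by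
    rw [eq_div_iff (hza x)]; linarith
  by_cases hC : C = 0
  · filter_upwards [hf] with x hx
    simp [hx, hC]
  exfalso
  obtain ⟨-, hlt⟩ := integral_sq_div_sub_lt hφ ha haM hnull hz hΩ
  have hCeq : C = μ * C * ∫ x, φ x ^ 2 / (z - a x) ∂ν := by
    rw [← integral_const_mul]
    refine integral_congr_ae (hf.mono fun x hx => ?_)
    simp only [hx]
    field_simp [hza x]
  have hone : μ * ∫ x, φ x ^ 2 / (z - a x) ∂ν = 1 := by
    apply mul_left_cancel₀ hC
    linear_combination -hCeq
  have hμΩ : μ * ∫ x, φ x ^ 2 / (M - a x) ∂ν ≤ 1 := by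
    calc _ ≤ (∫ x, φ x ^ 2 / (M - a x) ∂ν)⁻¹ * ∫ x, φ x ^ 2 / (M - a x) ∂ν :=
          mul_le_mul_of_nonneg_right hμle hΩ.le
      _ = 1 := inv_mul_cancel₀ hΩ.ne'
  nlinarith [mul_lt_mul_of_pos_left hlt hμ]

end RankOnePerturbation

theorem statement16_general
    (φ : 𝕋 → ℝ)
    (hφa : AnalyticOnNhd ℝ φ Set.univ)
    (w : 𝕋 → 𝕋 → ℝ)
    (hwa : AnalyticOnNhd ℝ (fun x : 𝕋 × 𝕋 => w x.1 x.2) Set.univ)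
    (p₀ : 𝕋)
    (δ : ℝ) (q0 : 𝕋 → 𝕋)
    (hq0max : ∀ p ∈ Metric.ball p₀ δ, ∀ q : 𝕋, w p q ≤ w p (q0 p))
    (hq0uniq : ∀ p ∈ Metric.ball p₀ δ, ∀ q : 𝕋, w p q = w p (q0 p) →
      ∃ v : Fin 3 → ℤ, q = q0 p + shift v)
    (p : 𝕋) (hp : p ∈ Metric.ball p₀ δ) (μ : ℝ) (hμ : 0 < μ)
    (hΩ : 0 < (∫ s in box, φ s ^ 2 / (w p (q0 p) - w p s)))
    (hμle : μ ≤ (∫ s in box, φ s ^ 2 / (w p (q0 p) - w p s))⁻¹) :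
    ∀ z : ℝ, w p (q0 p) < z →
      ∀ f : 𝕋 → ℝ, MemLp f 2 (volume.restrict box) →
        (∀ᵐ q ∂(volume.restrict box),
          w p q * f q + μ * φ q * ∫ t in box, φ t * f t = z * f q) →
        f =ᵐ[volume.restrict box] 0 := by
  intro z hz f _ heig
  have hw : Continuous (w p) := hwa.continuous.comp (Continuous.prodMk_right p)
  -- the maximum is attained only on the countable orbit `q0 p + 2πℤ³`
  have hlevel : volume {q | w p q = w p (q0 p)} = 0 := by
    refine measure_mono_null (fun q hq => ?_)
      ((Set.countable_range fun v => q0 p + shift v).measure_zero _)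
    obtain ⟨v, rfl⟩ := hq0uniq p hp q hq
    exact ⟨v, rfl⟩
  exact ae_eq_zero_of_rankOne_eigen hφa.continuous.measurable hw.measurable (hq0max p hp)
    (ae_restrict_of_ae (measure_eq_zero_iff_ae_notMem.1 hlevel)) hz hμ hΩ hμle heig

/-- Let `p ∈ U_δ(p₀)` and `0 < μ ≤ μ(p)`.  Then `H_μ(p)` has no
eigenvalue in `(M(p), ∞)`: for every `z > M(p)`, the only `f ∈ L²(T³)` with
`H_μ(p) f = z f` is `f = 0`. -/
theorem statement16
    (φ : 𝕋 → ℝ)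
    (hφa : AnalyticOnNhd ℝ φ Set.univ)
    (hφper : ∀ (x : 𝕋) (v : Fin 3 → ℤ), φ (x + shift v) = φ x)
    (hφnt : φ ≠ 0)
    (w : 𝕋 → 𝕋 → ℝ)
    (hwa : AnalyticOnNhd ℝ (fun x : 𝕋 × 𝕋 => w x.1 x.2) Set.univ)
    (hwper : ∀ (p q : 𝕋) (v u : Fin 3 → ℤ), w (p + shift v) (q + shift u) = w p q)
    (p₀ q₀ : 𝕋)
    (hmax : ∀ p q : 𝕋, w p q ≤ w p₀ q₀)
    (huniq : ∀ p q : 𝕋, w p q = w p₀ q₀ →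
      ∃ v u : Fin 3 → ℤ, p = p₀ + shift v ∧ q = q₀ + shift u)
    (hgrad : fderiv ℝ (fun x : 𝕋 × 𝕋 => w x.1 x.2) (p₀, q₀) = 0)
    (hhess : ∀ v : 𝕋 × 𝕋, v ≠ 0 →
      iteratedFDeriv ℝ 2 (fun x : 𝕋 × 𝕋 => w x.1 x.2) (p₀, q₀) ![v, v] < 0)
    (δ : ℝ) (hδ : 0 < δ) (q0 : 𝕋 → 𝕋)
    (hq0a : AnalyticOnNhd ℝ q0 (Metric.ball p₀ δ))
    (hq0max : ∀ p ∈ Metric.ball p₀ δ, ∀ q : 𝕋, w p q ≤ w p (q0 p))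
    (hq0uniq : ∀ p ∈ Metric.ball p₀ δ, ∀ q : 𝕋, w p q = w p (q0 p) →
      ∃ v : Fin 3 → ℤ, q = q0 p + shift v)
    (hq0grad : ∀ p ∈ Metric.ball p₀ δ, fderiv ℝ (w p) (q0 p) = 0)
    (hq0hess : ∀ p ∈ Metric.ball p₀ δ, ∀ v : 𝕋, v ≠ 0 →
      iteratedFDeriv ℝ 2 (w p) (q0 p) ![v, v] < 0)
    (p : 𝕋) (hp : p ∈ Metric.ball p₀ δ) (μ : ℝ) (hμ : 0 < μ)
    (hΩ : 0 < (∫ s in box, φ s ^ 2 / (w p (q0 p) - w p s)))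
    (hμle : μ ≤ (∫ s in box, φ s ^ 2 / (w p (q0 p) - w p s))⁻¹) :
    ∀ z : ℝ, w p (q0 p) < z →
      ∀ f : 𝕋 → ℝ, MemLp f 2 (volume.restrict box) →
        (∀ᵐ q ∂(volume.restrict box),
          w p q * f q + μ * φ q * ∫ t in box, φ t * f t = z * f q) →
        f =ᵐ[volume.restrict box] 0 :=
  statement16_general φ hφa w hwa p₀ δ q0 hq0max hq0uniq p hp μ hμ hΩ hμle
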